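/- Let σ > 0, 0 < ρ ≤ 1, let ∅ ≠ Ω ⊆ ℝ^d × ℝ^d, let A be an invertible real d × d matrix, and define χ_A(x, ξ) = (A^{−1} x, Aᵀ ξ). Set α = max(‖A‖, ‖A^{−1}‖) (operator norms). If ε, δ > 0 satisfy δ · α^{1 + max(σ, 1/σ)} ≤ ε, then (χ_A Ω)_{ρ,δ} ⊆ χ_A(Ω_{ρ,ε}). -/

import Mathlib

open scoped Real

variable {d : ℕ}

/-- The anisotropic weight `θ_σ(x,ξ) = 1 + ‖x‖ + ‖ξ‖^{1/σ}`. -/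
noncomputable def theta (d : ℕ) (σ : ℝ)
    (z : EuclideanSpace ℝ (Fin d) × EuclideanSpace ℝ (Fin d)) : ℝ :=
  1 + ‖z.1‖ + ‖z.2‖ ^ (1 / σ)

/-- The anisotropic neighborhood `Ω_{ρ,ε}` (with anisotropy parameter `σ`). -/
noncomputable def aniso (d : ℕ) (σ ρ ε : ℝ)
    (Ω : Set (EuclideanSpace ℝ (Fin d) × EuclideanSpace ℝ (Fin d))) :
    Set (EuclideanSpace ℝ (Fin d) × EuclideanSpace ℝ (Fin d)) :=
  {z | ∃ w ∈ Ω, ‖z.1 - w.1‖ < ε * theta d σ w ^ ρ ∧ ‖z.2 - w.2‖ < ε * theta d σ w ^ (ρ * σ)}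

/-- The constant `C_τ` in the quasi-triangle inequality. -/
noncomputable def Cq (τ : ℝ) : ℝ := if 1 ≤ τ then 1 else 2 ^ (1 / τ - 1)

/-- Euclidean norm of a pair. -/
noncomputable def pairNorm (z : EuclideanSpace ℝ (Fin d) × EuclideanSpace ℝ (Fin d)) : ℝ :=
  Real.sqrt (‖z.1‖ ^ 2 + ‖z.2‖ ^ 2)

/-- The bracket `⟨z⟩ = (1 + ‖z‖²)^{1/2}` for a pair (Euclidean norm). -/
noncomputable def pairBracket (z : EuclideanSpace ℝ (Fin d) × EuclideanSpace ℝ (Fin d)) : ℝ :=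
  Real.sqrt (1 + (‖z.1‖ ^ 2 + ‖z.2‖ ^ 2))

/-- Directional derivative. -/
noncomputable def dirDeriv {V F : Type*} [NormedAddCommGroup V] [NormedSpace ℝ V]
    [NormedAddCommGroup F] [NormedSpace ℝ F] (v : V) (f : V → F) : V → F :=
  fun x => fderiv ℝ f x v

/-- Iterated directional derivative along a list of directions. -/
noncomputable def listDeriv {V F : Type*} [NormedAddCommGroup V] [NormedSpace ℝ V]
    [NormedAddCommGroup F] [NormedSpace ℝ F] : List V → (V → F) → (V → F)
  | [], f => f
  | v :: vs, f => dirDeriv v (listDeriv vs f)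

/-- The directions realizing the partial derivative `∂_x^α ∂_ξ^β`. -/
noncomputable def mdirs (d : ℕ) (α β : Fin d → ℕ) :
    List (EuclideanSpace ℝ (Fin d) × EuclideanSpace ℝ (Fin d)) :=
  ((List.finRange d).flatMap fun i =>
      List.replicate (α i) ((EuclideanSpace.single i (1 : ℝ), 0))) ++
  ((List.finRange d).flatMap fun i =>
      List.replicate (β i) ((0, EuclideanSpace.single i (1 : ℝ))))

/-- Membership in the anisotropic Shubin symbol class `G_ρ^{r,σ}`. -/
def ShubinG {F : Type*} [NormedAddCommGroup F] [NormedSpace ℝ F]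
    (d : ℕ) (ρ r σ : ℝ)
    (a : EuclideanSpace ℝ (Fin d) × EuclideanSpace ℝ (Fin d) → F) : Prop :=
  ContDiff ℝ (⊤ : ℕ∞) a ∧
    ∀ α β : Fin d → ℕ, ∃ C > 0, ∀ z,
      ‖listDeriv (mdirs d α β) a z‖ ≤
        C * theta d σ z ^ (r - ρ * ((∑ i, (α i : ℝ)) + σ * ∑ i, (β i : ℝ)))

/-- `a` is elliptic in `Γ` (order `r`, parameter `σ`). -/
def EllipticIn (d : ℕ) (σ r : ℝ)
    (a : EuclideanSpace ℝ (Fin d) × EuclideanSpace ℝ (Fin d) → ℂ)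
    (Γ : Set (EuclideanSpace ℝ (Fin d) × EuclideanSpace ℝ (Fin d))) : Prop :=
  ∃ C > 0, ∃ R > 0, ∀ z ∈ Γ, R ≤ pairNorm z → C * theta d σ z ^ r ≤ ‖a z‖

/-- `V` is the short-time Fourier transform `V_φ u`. -/
def IsSTFT (d : ℕ) (φ : SchwartzMap (EuclideanSpace ℝ (Fin d)) ℂ)
    (u : SchwartzMap (EuclideanSpace ℝ (Fin d)) ℂ →L[ℝ] ℂ)
    (V : EuclideanSpace ℝ (Fin d) × EuclideanSpace ℝ (Fin d) → ℂ) : Prop :=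
  ∀ x ξ : EuclideanSpace ℝ (Fin d), ∃ g : SchwartzMap (EuclideanSpace ℝ (Fin d)) ℂ,
    (∀ y, g y = Complex.exp (-(Complex.I * ((inner ℝ y ξ : ℝ) : ℂ))) *
        (starRingEnd ℂ) (φ (y - x))) ∧
    V (x, ξ) = ((2 * Real.pi) ^ (-(d : ℝ) / 2) : ℝ) * u g

/-- The continuous linear map on Euclidean space associated to a matrix. -/
noncomputable def matCLM (d : ℕ) (A : Matrix (Fin d) (Fin d) ℝ) :
    EuclideanSpace ℝ (Fin d) →L[ℝ] EuclideanSpace ℝ (Fin d) :=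
  Matrix.toEuclideanCLM (𝕜 := ℝ) A


section AuxStmt13

lemma theta_one_le' (d : ℕ) (σ : ℝ)
    (z : EuclideanSpace ℝ (Fin d) × EuclideanSpace ℝ (Fin d)) : 1 ≤ theta d σ z := by
  unfold theta
  have h1 := Real.rpow_nonneg (norm_nonneg z.2) (1 / σ)
  have h2 := norm_nonneg z.1
  linarith

lemma matCLM_transpose_norm (d : ℕ) (M : Matrix (Fin d) (Fin d) ℝ) :
    ‖matCLM d M.transpose‖ = ‖matCLM d M‖ := by
  have h1 : M.transpose = star M := by ext i j; simp [Matrix.star_apply]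
  rw [h1, matCLM, map_star, ContinuousLinearMap.star_eq_adjoint]
  exact LinearIsometryEquiv.norm_map ContinuousLinearMap.adjoint _

lemma matCLM_mul_apply (d : ℕ) (M N : Matrix (Fin d) (Fin d) ℝ) (h : M * N = 1)
    (x : EuclideanSpace ℝ (Fin d)) : matCLM d M (matCLM d N x) = x := by
  have hmul : matCLM d M * matCLM d N = 1 := by
    rw [matCLM, matCLM, ← map_mul, h, map_one]
  calc matCLM d M (matCLM d N x) = (matCLM d M * matCLM d N) x := rfl
    _ = x := by rw [hmul]; rfl

lemma chain_aux (α δ ε m₀ m e t t' : ℝ) (hα : 1 ≤ α) (ht : 1 ≤ t) (ht' : 0 ≤ t')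
    (hbd : t' ≤ α ^ m₀ * t) (he : 0 < e) (hem : e * m₀ ≤ m)
    (hδ : 0 < δ) (hδε : δ * α ^ (1 + m) ≤ ε) :
    α * (δ * t' ^ e) ≤ ε * t ^ e := by
  have hα0 : (0:ℝ) < α := lt_of_lt_of_le one_pos hα
  have ht0 : (0:ℝ) ≤ t := by linarith
  have hTe : (0:ℝ) ≤ t ^ e := Real.rpow_nonneg ht0 e
  have hX : t' ^ e ≤ α ^ m * t ^ e := by
    calc t' ^ e ≤ (α ^ m₀ * t) ^ e := Real.rpow_le_rpow ht' hbd he.le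
      _ = α ^ (m₀ * e) * t ^ e := by
          rw [Real.mul_rpow (Real.rpow_nonneg hα0.le _) ht0, ← Real.rpow_mul hα0.le]
      _ ≤ α ^ m * t ^ e :=
          mul_le_mul_of_nonneg_right
            (Real.rpow_le_rpow_of_exponent_le hα (by linarith)) hTe
  calc α * (δ * t' ^ e) ≤ α * (δ * (α ^ m * t ^ e)) := by
        exact mul_le_mul_of_nonneg_left (mul_le_mul_of_nonneg_left hX hδ.le) hα0.le
    _ = δ * α ^ (1 + m) * t ^ e := by rw [Real.rpow_add hα0, Real.rpow_one]; ring
    _ ≤ ε * t ^ e := mul_le_mul_of_nonneg_right hδε hTe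

lemma theta_map_le (d : ℕ) (σ : ℝ) (hσ : 0 < σ) (α : ℝ) (hα : 1 ≤ α)
    (T S : EuclideanSpace ℝ (Fin d) →L[ℝ] EuclideanSpace ℝ (Fin d))
    (hT : ‖T‖ ≤ α) (hS : ‖S‖ ≤ α)
    (w : EuclideanSpace ℝ (Fin d) × EuclideanSpace ℝ (Fin d)) :
    theta d σ (T w.1, S w.2) ≤ α ^ max 1 (1/σ) * theta d σ w := by
  have hα0 : (0:ℝ) < α := lt_of_lt_of_le one_pos hα
  have h1a : α ≤ α ^ max 1 (1/σ) := by
    nth_rewrite 1 [← Real.rpow_one α]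
    exact Real.rpow_le_rpow_of_exponent_le hα (le_max_left _ _)
  have h1b : (1:ℝ) ≤ α ^ max 1 (1/σ) := le_trans hα h1a
  have h1c : α ^ (1/σ) ≤ α ^ max 1 (1/σ) :=
    Real.rpow_le_rpow_of_exponent_le hα (le_max_right _ _)
  have hx : ‖T w.1‖ ≤ α * ‖w.1‖ :=
    (T.le_opNorm w.1).trans (mul_le_mul_of_nonneg_right hT (norm_nonneg _))
  have hy : ‖S w.2‖ ^ (1/σ) ≤ α ^ (1/σ) * ‖w.2‖ ^ (1/σ) := by
    rw [← Real.mul_rpow hα0.le (norm_nonneg _)]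
    exact Real.rpow_le_rpow (norm_nonneg _)
      ((S.le_opNorm w.2).trans (mul_le_mul_of_nonneg_right hS (norm_nonneg _)))
      (by positivity)
  have hw1 : (0:ℝ) ≤ ‖w.1‖ := norm_nonneg _
  have hw2 : (0:ℝ) ≤ ‖w.2‖ ^ (1/σ) := Real.rpow_nonneg (norm_nonneg _) _
  unfold theta
  simp only
  nlinarith [mul_le_mul_of_nonneg_right h1a hw1, mul_le_mul_of_nonneg_right h1c hw2]

end AuxStmt13

/-- behavior of anisotropic neighborhoods under
`χ_A(x,ξ) = (A⁻¹x, Aᵀξ)` for an invertible matrix `A`. -/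
theorem stmt13 (d : ℕ) (σ ρ ε δ : ℝ) (hσ : 0 < σ) (hρ0 : 0 < ρ) (hρ1 : ρ ≤ 1)
    (Ω : Set (EuclideanSpace ℝ (Fin d) × EuclideanSpace ℝ (Fin d))) (hΩ : Ω.Nonempty)
    (A : Matrix (Fin d) (Fin d) ℝ) (hA : IsUnit A)
    (hε : 0 < ε) (hδ : 0 < δ)
    (hδε : δ * (max ‖matCLM d A‖ ‖matCLM d A⁻¹‖) ^ (1 + max σ (1 / σ)) ≤ ε) :
    aniso d σ ρ δ
        ((fun z : EuclideanSpace ℝ (Fin d) × EuclideanSpace ℝ (Fin d) =>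
          (matCLM d A⁻¹ z.1, matCLM d A.transpose z.2)) '' Ω)
      ⊆ (fun z : EuclideanSpace ℝ (Fin d) × EuclideanSpace ℝ (Fin d) =>
          (matCLM d A⁻¹ z.1, matCLM d A.transpose z.2)) '' (aniso d σ ρ ε Ω) := by
  rcases eq_or_ne d 0 with hd | hd
  · subst hd
    haveI : Subsingleton (EuclideanSpace ℝ (Fin 0)) := ⟨fun a b => by ext i; exact i.elim0⟩
    intro z _hz
    obtain ⟨w, hw⟩ := hΩ
    have hθ : 0 < theta 0 σ w := lt_of_lt_of_le one_pos (theta_one_le' 0 σ w)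
    refine ⟨w, ⟨w, hw, ?_, ?_⟩, ?_⟩
    · have h0 : w.1 - w.1 = 0 := sub_self _
      rw [h0, norm_zero]
      exact mul_pos hε (Real.rpow_pos_of_pos hθ _)
    · have h0 : w.2 - w.2 = 0 := sub_self _
      rw [h0, norm_zero]
      exact mul_pos hε (Real.rpow_pos_of_pos hθ _)
    · exact Prod.ext (Subsingleton.elim _ _) (Subsingleton.elim _ _)
  · set α := max ‖matCLM d A‖ ‖matCLM d A⁻¹‖ with hαdef
    have hdet : IsUnit A.det := (Matrix.isUnit_iff_isUnit_det A).mp hA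
    have hAAi : A * A⁻¹ = 1 := Matrix.mul_nonsing_inv A hdet
    have hAiA : A⁻¹ * A = 1 := Matrix.nonsing_inv_mul A hdet
    have htAAi : A.transpose * A⁻¹.transpose = 1 := by
      rw [← Matrix.transpose_mul, hAiA, Matrix.transpose_one]
    have htAiA : A⁻¹.transpose * A.transpose = 1 := by
      rw [← Matrix.transpose_mul, hAAi, Matrix.transpose_one]
    have hα1 : (1:ℝ) ≤ α := by
      have i0 : Fin d := ⟨0, Nat.pos_of_ne_zero hd⟩
      set e : EuclideanSpace ℝ (Fin d) := EuclideanSpace.single i0 (1:ℝ) with he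
      have hne : ‖e‖ = 1 := by rw [he, EuclideanSpace.norm_single]; norm_num
      have h1 : (1:ℝ) = ‖matCLM d A (matCLM d A⁻¹ e)‖ := by
        rw [matCLM_mul_apply d A A⁻¹ hAAi, hne]
      have h2 : ‖matCLM d A (matCLM d A⁻¹ e)‖ ≤ α * (α * ‖e‖) := by
        calc ‖matCLM d A (matCLM d A⁻¹ e)‖ ≤ ‖matCLM d A‖ * ‖matCLM d A⁻¹ e‖ :=
              ContinuousLinearMap.le_opNorm _ _
          _ ≤ α * (α * ‖e‖) := by
              have h3 : ‖matCLM d A⁻¹ e‖ ≤ α * ‖e‖ :=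
                ((matCLM d A⁻¹).le_opNorm e).trans
                  (mul_le_mul_of_nonneg_right (le_max_right _ _) (norm_nonneg _))
              have h4 : ‖matCLM d A‖ ≤ α := le_max_left _ _
              have h5 : (0:ℝ) ≤ α * ‖e‖ := by positivity
              nlinarith [norm_nonneg (matCLM d A⁻¹ e), norm_nonneg (matCLM d A)]
      have hα0 : (0:ℝ) ≤ α := le_trans (norm_nonneg _) (le_max_left _ _)
      rw [hne] at h2
      nlinarith
    have hα0 : (0:ℝ) < α := lt_of_lt_of_le one_pos hα1
    have hnB : ‖matCLM d A‖ ≤ α := le_max_left _ _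
    have hnBi : ‖matCLM d A⁻¹‖ ≤ α := le_max_right _ _
    have hnBt : ‖matCLM d A.transpose‖ ≤ α := by
      rw [matCLM_transpose_norm]; exact le_max_left _ _
    have hnBit : ‖matCLM d A⁻¹.transpose‖ ≤ α := by
      rw [matCLM_transpose_norm]; exact le_max_right _ _
    -- exponent comparisons
    have hem1 : ρ * max 1 (1/σ) ≤ max σ (1/σ) := by
      rcases le_total σ 1 with h | h
      · have h1 : 1 ≤ 1/σ := by rw [le_div_iff₀ hσ]; linarith
        rw [max_eq_right h1, max_eq_right (by linarith : σ ≤ 1/σ)]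
        nlinarith
      · have h1 : 1/σ ≤ 1 := by rw [div_le_one hσ]; exact h
        rw [max_eq_left h1, max_eq_left (le_trans h1 h)]
        nlinarith
    have hem2 : ρ * σ * max 1 (1/σ) ≤ max σ (1/σ) := by
      have hσinv : σ * (1/σ) = 1 := by field_simp
      rcases le_total σ 1 with h | h
      · have h1 : 1 ≤ 1/σ := by rw [le_div_iff₀ hσ]; linarith
        rw [max_eq_right h1, max_eq_right (by linarith : σ ≤ 1/σ)]
        have : ρ * σ * (1/σ) = ρ := by field_simp
        rw [this]; linarith
      · have h1 : 1/σ ≤ 1 := by rw [div_le_one hσ]; exact h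
        rw [max_eq_left h1, max_eq_left (le_trans h1 h)]
        nlinarith
    intro z hz
    obtain ⟨w', hw', h1, h2⟩ := hz
    obtain ⟨w, hwΩ, rfl⟩ := hw'
    simp only at h1 h2
    have hθw1 : 1 ≤ theta d σ w := theta_one_le' d σ w
    have hθ'0 : 0 ≤ theta d σ (matCLM d A⁻¹ w.1, matCLM d A.transpose w.2) :=
      le_trans zero_le_one (theta_one_le' d σ _)
    have hθbd : theta d σ (matCLM d A⁻¹ w.1, matCLM d A.transpose w.2) ≤
        α ^ max 1 (1/σ) * theta d σ w :=
      theta_map_le d σ hσ α hα1 (matCLM d A⁻¹) (matCLM d A.transpose) hnBi hnBt w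
    refine ⟨(matCLM d A z.1, matCLM d A⁻¹.transpose z.2), ⟨w, hwΩ, ?_, ?_⟩, ?_⟩
    · show ‖matCLM d A z.1 - w.1‖ < ε * theta d σ w ^ ρ
      have e1 : matCLM d A z.1 - w.1 = matCLM d A (z.1 - matCLM d A⁻¹ w.1) := by
        rw [map_sub, matCLM_mul_apply d A A⁻¹ hAAi]
      rw [e1]
      calc ‖matCLM d A (z.1 - matCLM d A⁻¹ w.1)‖ ≤ α * ‖z.1 - matCLM d A⁻¹ w.1‖ :=
            ((matCLM d A).le_opNorm _).trans
              (mul_le_mul_of_nonneg_right hnB (norm_nonneg _))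
        _ < α * (δ * theta d σ (matCLM d A⁻¹ w.1, matCLM d A.transpose w.2) ^ ρ) :=
            mul_lt_mul_of_pos_left h1 hα0
        _ ≤ ε * theta d σ w ^ ρ :=
            chain_aux α δ ε (max 1 (1/σ)) (max σ (1/σ)) ρ _ _ hα1 hθw1 hθ'0 hθbd hρ0
              hem1 hδ hδε
    · show ‖matCLM d A⁻¹.transpose z.2 - w.2‖ < ε * theta d σ w ^ (ρ * σ)
      have e2 : matCLM d A⁻¹.transpose z.2 - w.2 =
          matCLM d A⁻¹.transpose (z.2 - matCLM d A.transpose w.2) := by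
        rw [map_sub, matCLM_mul_apply d A⁻¹.transpose A.transpose htAiA]
      rw [e2]
      calc ‖matCLM d A⁻¹.transpose (z.2 - matCLM d A.transpose w.2)‖ ≤
            α * ‖z.2 - matCLM d A.transpose w.2‖ :=
            ((matCLM d A⁻¹.transpose).le_opNorm _).trans
              (mul_le_mul_of_nonneg_right hnBit (norm_nonneg _))
        _ < α * (δ * theta d σ (matCLM d A⁻¹ w.1, matCLM d A.transpose w.2) ^ (ρ * σ)) :=
            mul_lt_mul_of_pos_left h2 hα0
        _ ≤ ε * theta d σ w ^ (ρ * σ) :=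
            chain_aux α δ ε (max 1 (1/σ)) (max σ (1/σ)) (ρ * σ) _ _ hα1 hθw1 hθ'0 hθbd
              (mul_pos hρ0 hσ) hem2 hδ hδε
    · exact Prod.ext (matCLM_mul_apply d A⁻¹ A hAiA z.1)
        (matCLM_mul_apply d A.transpose A⁻¹.transpose htAAi z.2)
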